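/- Lipschitz continuity in θ of the crossover Metropolis–Hastings sub-transition: there exists a constant c such that for all θ, θ' ∈ Θ and all pairs x̄ = (x^{(1)}, x^{(2)}), ȳ = (y^{(1)}, y^{(2)}), |s_θ(x̄, ȳ) − s_{θ'}(x̄, ȳ)| ≤ c · q(x̄, ȳ) · ‖θ − θ'‖; indeed each partial derivative satisfies |∂s_θ(x̄,ȳ)/∂θ_i| ≤ 2 q(x̄, ȳ). -/
import Mathlib


/-- The sub-transition function `s_θ(x̄, ȳ) = q(x̄,ȳ) · min{1, r(θ,x̄,ȳ)}` of the crossover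
Metropolis–Hastings move, where
`r(θ,x̄,ȳ) = [ψ(y⁽¹⁾)ψ(y⁽²⁾)/(ψ(x⁽¹⁾)ψ(x⁽²⁾))] · exp(θ_{J(x⁽¹⁾)} + θ_{J(x⁽²⁾)} − θ_{J(y⁽¹⁾)} − θ_{J(y⁽²⁾)}) · q(ȳ,x̄)/q(x̄,ȳ)`
and `J(x)` is the index of the partition element containing `x`. -/
noncomputable def crossoverS {𝒳 : Type*} {m : ℕ} (ψ : 𝒳 → ℝ) (J : 𝒳 → Fin m)
    (q : 𝒳 × 𝒳 → 𝒳 × 𝒳 → ℝ) (θ : Fin m → ℝ) (xp yp : 𝒳 × 𝒳) : ℝ :=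
  q xp yp * min 1
    (ψ yp.1 * ψ yp.2 / (ψ xp.1 * ψ xp.2) *
      Real.exp (θ (J xp.1) + θ (J xp.2) - θ (J yp.1) - θ (J yp.2)) *
      (q yp xp / q xp yp))

lemma min_exp_lip (K u v : ℝ) (hK : 0 ≤ K) :
    |min 1 (K * Real.exp u) - min 1 (K * Real.exp v)| ≤ |u - v| := by
  wlog h : v ≤ u generalizing u v
  · rw [abs_sub_comm, abs_sub_comm u v]; exact this v u (le_of_not_ge h)
  have he : Real.exp v ≤ Real.exp u := Real.exp_le_exp.2 h
  have h1 : min 1 (K * Real.exp v) ≤ min 1 (K * Real.exp u) :=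
    min_le_min le_rfl (by nlinarith)
  rw [abs_of_nonneg (by linarith), abs_of_nonneg (by linarith)]
  have key : (v - u) + 1 ≤ Real.exp (v - u) := Real.add_one_le_exp _
  have hexp : Real.exp v = Real.exp u * Real.exp (v - u) := by
    rw [← Real.exp_add]; ring_nf
  rcases le_or_gt (K * Real.exp u) 1 with h2 | h2
  · rw [min_eq_right h2, min_eq_right (le_trans (by nlinarith) h2)]
    nlinarith [Real.exp_pos u, Real.exp_pos v]
  · rw [min_eq_left h2.le]
    rcases le_or_gt (K * Real.exp v) 1 with h3 | h3
    · rw [min_eq_right h3]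
      nlinarith [Real.exp_pos u, Real.exp_pos (v - u)]
    · rw [min_eq_left h3.le]; simpa using h

lemma abs_deriv_le {f : ℝ → ℝ} {D x C : ℝ}
    (hf : HasDerivAt f D x) (hl : ∀ a b, |f a - f b| ≤ C * |a - b|) : |D| ≤ C := by
  have ht : Filter.Tendsto (fun y => |slope f x y|) (nhdsWithin x {x}ᶜ) (nhds |D|) :=
    ((hasDerivAt_iff_tendsto_slope.1 hf).abs)
  refine le_of_tendsto ht ?_
  filter_upwards [self_mem_nhdsWithin] with y hy
  have hxy : y - x ≠ 0 := sub_ne_zero.2 hy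
  rw [slope_def_field, div_eq_mul_inv, abs_mul, abs_inv]
  calc |f y - f x| * |y - x|⁻¹ ≤ (C * |y - x|) * |y - x|⁻¹ := by
        apply mul_le_mul_of_nonneg_right (hl y x) (by positivity)
    _ = C := by rw [mul_assoc, mul_inv_cancel₀ (abs_ne_zero.2 hxy), mul_one]

lemma crossoverS_diff_le {𝒳 : Type*} {m : ℕ} (ψ : 𝒳 → ℝ)
    (hψ : ∀ x, 0 < ψ x) (J : 𝒳 → Fin m)
    (q : 𝒳 × 𝒳 → 𝒳 × 𝒳 → ℝ) (hq : ∀ xp yp, 0 ≤ q xp yp)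
    (θ θ' : Fin m → ℝ) (xp yp : 𝒳 × 𝒳) :
    |crossoverS ψ J q θ xp yp - crossoverS ψ J q θ' xp yp| ≤
      q xp yp * |(θ (J xp.1) + θ (J xp.2) - θ (J yp.1) - θ (J yp.2)) -
        (θ' (J xp.1) + θ' (J xp.2) - θ' (J yp.1) - θ' (J yp.2))| := by
  set K : ℝ := ψ yp.1 * ψ yp.2 / (ψ xp.1 * ψ xp.2) * (q yp xp / q xp yp) with hKdef
  have hK : 0 ≤ K :=
    mul_nonneg (div_nonneg (mul_nonneg (hψ _).le (hψ _).le)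
      (mul_nonneg (hψ _).le (hψ _).le)) (div_nonneg (hq _ _) (hq _ _))
  have hre : ∀ τ : Fin m → ℝ, crossoverS ψ J q τ xp yp =
      q xp yp * min 1 (K * Real.exp (τ (J xp.1) + τ (J xp.2) - τ (J yp.1) - τ (J yp.2))) := by
    intro τ; unfold crossoverS; rw [hKdef]; ring_nf
  rw [hre θ, hre θ', ← mul_sub, abs_mul, abs_of_nonneg (hq _ _)]
  exact mul_le_mul_of_nonneg_left (min_exp_lip K _ _ hK) (hq _ _)

/-- Lipschitz continuity in `θ` of the crossover Metropolis–Hastings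
sub-transition: there is a constant `c` such that for all `θ, θ' ∈ Θ` and all pairs `x̄, ȳ`,
`|s_θ(x̄,ȳ) − s_{θ'}(x̄,ȳ)| ≤ c · q(x̄,ȳ) · ‖θ − θ'‖`; indeed each partial derivative satisfies
`|∂s_θ(x̄,ȳ)/∂θ_i| ≤ 2 q(x̄,ȳ)`. -/
theorem stmt_18 {𝒳 : Type*} {m : ℕ} (E : Fin m → Set 𝒳) (ψ : 𝒳 → ℝ)
    (hψ : ∀ x, 0 < ψ x) (J : 𝒳 → Fin m) (hJ : ∀ x, x ∈ E (J x))
    (hpart : ∀ x i, x ∈ E i → i = J x)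
    (q : 𝒳 × 𝒳 → 𝒳 × 𝒳 → ℝ) (hq : ∀ xp yp, 0 ≤ q xp yp)
    (Θ : Set (Fin m → ℝ)) (hΘ : IsCompact Θ) :
    (∃ c : ℝ, ∀ θ ∈ Θ, ∀ θ' ∈ Θ, ∀ xp yp : 𝒳 × 𝒳,
        |crossoverS ψ J q θ xp yp - crossoverS ψ J q θ' xp yp| ≤ c * q xp yp * ‖θ - θ'‖) ∧
      ∀ (θ : Fin m → ℝ) (i : Fin m) (xp yp : 𝒳 × 𝒳) (D : ℝ),
        HasDerivAt (fun τ : ℝ => crossoverS ψ J q (Function.update θ i τ) xp yp) D (θ i) →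
        |D| ≤ 2 * q xp yp := by
  constructor
  · refine ⟨4, fun θ _ θ' _ xp yp => ?_⟩
    refine (crossoverS_diff_le ψ hψ J q hq θ θ' xp yp).trans ?_
    have hcoord : ∀ j : Fin m, |θ j - θ' j| ≤ ‖θ - θ'‖ := fun j => by
      simpa [Real.norm_eq_abs] using norm_le_pi_norm (θ - θ') j
    have habs : |(θ (J xp.1) + θ (J xp.2) - θ (J yp.1) - θ (J yp.2)) -
        (θ' (J xp.1) + θ' (J xp.2) - θ' (J yp.1) - θ' (J yp.2))| ≤ 4 * ‖θ - θ'‖ := by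
      have h1 := hcoord (J xp.1); have h2 := hcoord (J xp.2)
      have h3 := hcoord (J yp.1); have h4 := hcoord (J yp.2)
      rw [abs_le] at *
      constructor <;> linarith [h1.1, h1.2, h2.1, h2.2, h3.1, h3.2, h4.1, h4.2]
    calc q xp yp * _ ≤ q xp yp * (4 * ‖θ - θ'‖) :=
          mul_le_mul_of_nonneg_left habs (hq _ _)
      _ = 4 * q xp yp * ‖θ - θ'‖ := by ring
  · intro θ i xp yp D hD
    refine abs_deriv_le hD fun a b => ?_
    refine (crossoverS_diff_le ψ hψ J q hq _ _ xp yp).trans ?_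
    have hd : ∀ j : Fin m, Function.update θ i a j - Function.update θ i b j =
        (if j = i then (1:ℝ) else 0) * (a - b) := by
      intro j; rcases eq_or_ne j i with h | h <;> simp [Function.update_apply, h]
    set e : Fin m → ℝ := fun j => if j = i then (1:ℝ) else 0 with he
    have key : |(Function.update θ i a (J xp.1) + Function.update θ i a (J xp.2)
          - Function.update θ i a (J yp.1) - Function.update θ i a (J yp.2)) -
        (Function.update θ i b (J xp.1) + Function.update θ i b (J xp.2)
          - Function.update θ i b (J yp.1) - Function.update θ i b (J yp.2))|
        ≤ 2 * |a - b| := by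
      have heq : (Function.update θ i a (J xp.1) + Function.update θ i a (J xp.2)
          - Function.update θ i a (J yp.1) - Function.update θ i a (J yp.2)) -
        (Function.update θ i b (J xp.1) + Function.update θ i b (J xp.2)
          - Function.update θ i b (J yp.1) - Function.update θ i b (J yp.2)) =
          (e (J xp.1) + e (J xp.2) - e (J yp.1) - e (J yp.2)) * (a - b) := by
        have h1 := hd (J xp.1); have h2 := hd (J xp.2)
        have h3 := hd (J yp.1); have h4 := hd (J yp.2)
        simp only [he] at h1 h2 h3 h4 ⊢
        linear_combination h1 + h2 - h3 - h4
      rw [heq, abs_mul]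
      have hbe : |e (J xp.1) + e (J xp.2) - e (J yp.1) - e (J yp.2)| ≤ 2 := by
        simp only [he]; split_ifs <;> norm_num
      exact mul_le_mul_of_nonneg_right hbe (abs_nonneg _)
    calc q xp yp * _ ≤ q xp yp * (2 * |a - b|) :=
          mul_le_mul_of_nonneg_left key (hq _ _)
      _ = 2 * q xp yp * |a - b| := by ring
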